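/- arXiv:1604.02437 — 12 statements merged into one kernel-verified Lean document; each statement's English description precedes it below -/
import Mathlib

section
/- Let X be a compact metric space, F : X ≃ₜ X a homeomorphism, and μ a Borel measure on X with μ(V) > 0 for every nonempty open set V. Let A be a Milnor attractor of F. Suppose that (i) there is a sequence (γ_j)_{j∈ℕ} of topological sinks of F (each with some trapping neighborhood) such that γ_j → p for some point p ∈ X, and (ii) there is a topological sink γ of F with trapping neighborhood U and a point z ∈ X lying in the basin ⋃_{n≥0} (F^[n])⁻¹' U of γ but not on the orbit O(γ), such that p is a cluster point of the backward orbit ((F⁻¹)^[n](z))_{n∈ℕ}. Then A is not Lyapunov stable for F. (Abstract form of Proposition 3.1 of the paper: the hypotheses 'W^u(p) intersects the basin of a sink' and 'sinks accumulate to p' are expressed via their topological content actually used in the proof.) -/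
open Set Function Filter Topology MeasureTheory

/-- The ω-limit set of `x` under `F`: `⋂_N closure {F^[n] x : n ≥ N}`. -/
def omegaSet {X : Type*} [TopologicalSpace X] (F : X → X) (x : X) : Set X :=
  ⋂ N : ℕ, closure ((fun n => F^[n] x) '' Set.Ici N)

/-- Lyapunov stability of a set `K` for the map `F`. -/
def IsLyapunovStable {X : Type*} [TopologicalSpace X] (F : X → X) (K : Set X) : Prop :=
  ∀ V : Set X, IsOpen V → K ⊆ V →
    ∃ W : Set X, IsOpen W ∧ K ⊆ W ∧ ∀ x ∈ W, ∀ n : ℕ, F^[n] x ∈ V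

/-- The (forward) orbit of a point; for a periodic point with `F^[m] γ = γ`, `m ≥ 1`,
this coincides with `{F^[i] γ : 0 ≤ i < m}`. -/
def orbitSet {X : Type*} (F : X → X) (γ : X) : Set X := Set.range fun i : ℕ => F^[i] γ

/-- `γ` is a periodic topological sink of `F` with trapping neighborhood `U`. -/
def IsTopSink {X : Type*} [TopologicalSpace X] (F : X → X) (γ : X) (U : Set X) : Prop :=
  (∃ m : ℕ, 1 ≤ m ∧ F^[m] γ = γ) ∧ IsOpen U ∧ orbitSet F γ ⊆ U ∧
    F '' closure U ⊆ U ∧ (⋂ n : ℕ, F^[n] '' U) = orbitSet F γ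

/-- The basin of a trapping neighborhood `U`. -/
def basin {X : Type*} (F : X → X) (U : Set X) : Set X := ⋃ n : ℕ, F^[n] ⁻¹' U

/-- `A` is the Milnor attractor of `F` w.r.t. the measure `μ`. -/
def IsMilnorAttractor {X : Type*} [TopologicalSpace X] [MeasurableSpace X]
    (μ : Measure X) (F : X → X) (A : Set X) : Prop :=
  IsClosed A ∧ (∀ᵐ x ∂μ, omegaSet F x ⊆ A) ∧
    ∀ A' : Set X, IsClosed A' → (∀ᵐ x ∂μ, omegaSet F x ⊆ A') → A ⊆ A'

/-!
Every sink `γ_j` lies in the Milnor attractor `A`: its basin is open and nonempty, hence of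
positive measure, so it contains a point whose ω-limit set, the orbit of `γ_j`, lies in `A`.
As `A` is closed, also `p ∈ A`. On the other hand `A` meets the basin of `γ` only in the
orbit of `γ`, since removing the rest of the basin from `A` leaves a closed set that still
contains almost every ω-limit set; so `z ∉ A`. If `A` were Lyapunov stable, the
neighbourhood `{z}ᶜ` of `A` would contain the forward orbits of all points near `A`, in
particular of the points `F⁻ⁿ z` close to `p`, whose `n`-th iterate is `z`.
-/

section OmegaLimit

variable {X : Type*} [TopologicalSpace X] {F : X → X}

theorem omegaSet_nonempty [CompactSpace X] (x : X) : (omegaSet F x).Nonempty :=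
  IsCompact.nonempty_iInter_of_sequence_nonempty_isCompact_isClosed _
    (fun N => closure_mono (image_mono (Ici_subset_Ici.2 N.le_succ)))
    (fun N => ⟨F^[N] x, subset_closure ⟨N, self_mem_Ici, rfl⟩⟩)
    isClosed_closure.isCompact (fun _ => isClosed_closure)

theorem omegaSet_subset_closure {x : X} {S : Set X} {N : ℕ} (h : ∀ n ≥ N, F^[n] x ∈ S) :
    omegaSet F x ⊆ closure S :=
  (iInter_subset _ N).trans (closure_mono (by rintro _ ⟨n, hn, rfl⟩; exact h n hn))

theorem mapsTo_omegaSet (hF : Continuous F) (x : X) :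
    MapsTo F (omegaSet F x) (omegaSet F x) := by
  intro q hq
  refine mem_iInter.2 fun N => ?_
  have hshift : F '' ((fun n => F^[n] x) '' Ici N) ⊆ (fun n => F^[n] x) '' Ici N := by
    rintro _ ⟨_, ⟨n, hn, rfl⟩, rfl⟩
    exact ⟨n + 1, Nat.le_succ_of_le hn, iterate_succ_apply' F n x⟩
  exact closure_mono hshift (image_closure_subset_closure_image hF ⟨q, mem_iInter.1 hq N, rfl⟩)

theorem isOpen_basin (hF : Continuous F) {U : Set X} (hU : IsOpen U) : IsOpen (basin F U) :=
  isOpen_iUnion fun n => hU.preimage (hF.iterate n)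

theorem mem_basin_of_mem_omegaSet (hF : Continuous F) {U : Set X} (hU : IsOpen U) {x q : X}
    (hq : q ∈ omegaSet F x) (hqU : q ∈ basin F U) : x ∈ basin F U := by
  obtain ⟨k, hk⟩ := mem_iUnion.1 hqU
  have hkq : F^[k] q ∈ closure ((fun n => F^[n] x) '' Ici 0) :=
    mem_iInter.1 ((mapsTo_omegaSet hF x).iterate k hq) 0
  obtain ⟨_, hU', n, -, rfl⟩ := mem_closure_iff.1 hkq U hU hk
  exact mem_iUnion.2 ⟨n, hU'⟩

end OmegaLimit

namespace IsTopSink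

variable {X : Type*} [TopologicalSpace X] {F : X → X} {γ : X} {U : Set X}

theorem isPeriodicPt (h : IsTopSink F γ U) : ∃ m, 0 < m ∧ IsPeriodicPt F m γ :=
  h.1

theorem mapsTo (h : IsTopSink F γ U) : MapsTo F U U :=
  fun _ hu => h.2.2.2.1 ⟨_, subset_closure hu, rfl⟩

theorem isClosed_orbitSet [T1Space X] (h : IsTopSink F γ U) : IsClosed (orbitSet F γ) := by
  obtain ⟨m, hm, hper⟩ := h.isPeriodicPt
  refine (((finite_Iio m).image fun i => F^[i] γ).subset ?_).isClosed
  rintro _ ⟨i, rfl⟩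
  exact ⟨i % m, Nat.mod_lt i hm, hper.iterate_mod_apply i⟩

theorem self_mem_basin (h : IsTopSink F γ U) : γ ∈ basin F U :=
  mem_iUnion.2 ⟨0, h.2.2.1 ⟨0, rfl⟩⟩

theorem omegaSet_subset [CompactSpace X] [T2Space X] (h : IsTopSink F γ U)
    (hF : Continuous F) {x : X} (hx : x ∈ basin F U) : omegaSet F x ⊆ orbitSet F γ := by
  obtain ⟨N, hN⟩ := mem_iUnion.1 hx
  rw [← h.2.2.2.2]
  refine subset_iInter fun j => ?_
  have htail : ∀ n ≥ N + (j + 1), F^[n] x ∈ F^[j + 1] '' U := by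
    intro n hn
    refine ⟨F^[n - N - (j + 1)] (F^[N] x), h.mapsTo.iterate _ hN, ?_⟩
    rw [← iterate_add_apply, ← iterate_add_apply]
    congr 1
    omega
  -- Compactness turns `closure (Fʲ⁺¹ U)` into `Fʲ⁺¹ (closure U)`, which lies in `Fʲ U`.
  calc omegaSet F x ⊆ closure (F^[j + 1] '' U) := omegaSet_subset_closure htail
    _ = F^[j + 1] '' closure U :=
      ((hF.iterate _).isClosedMap).closure_image_eq_of_continuous (hF.iterate _) U
    _ = F^[j] '' (F '' closure U) := by rw [iterate_succ, image_comp]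
    _ ⊆ F^[j] '' U := image_mono h.2.2.2.1

theorem self_mem_omegaSet [CompactSpace X] [T2Space X] (h : IsTopSink F γ U)
    (hF : Continuous F) {x : X} (hx : x ∈ basin F U) : γ ∈ omegaSet F x := by
  obtain ⟨m, hm, hper⟩ := h.isPeriodicPt
  obtain ⟨q, hq⟩ := omegaSet_nonempty (F := F) x
  obtain ⟨i, rfl⟩ := h.omegaSet_subset hF hx hq
  have hreturn : F^[(m - 1) * i] (F^[i] γ) = γ := by
    rw [← iterate_add_apply, ← Nat.succ_mul, Nat.succ_eq_add_one, Nat.sub_add_cancel hm]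
    exact hper.mul_const i
  exact hreturn ▸ (mapsTo_omegaSet hF x).iterate _ hq

end IsTopSink

namespace IsMilnorAttractor

variable {X : Type*} [TopologicalSpace X] [CompactSpace X] [T2Space X] [MeasurableSpace X]
  {μ : Measure X} {F : X → X} {A : Set X} {γ : X} {U : Set X}

theorem inter_basin_subset_orbitSet (hA : IsMilnorAttractor μ F A) (hF : Continuous F)
    (h : IsTopSink F γ U) : A ∩ basin F U ⊆ orbitSet F γ := by
  have hclosed : IsClosed ((A \ basin F U) ∪ orbitSet F γ) :=
    (hA.1.sdiff (isOpen_basin hF h.2.1)).union h.isClosed_orbitSet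
  have hae : ∀ᵐ x ∂μ, omegaSet F x ⊆ (A \ basin F U) ∪ orbitSet F γ := by
    filter_upwards [hA.2.1] with x hx
    by_cases hxU : x ∈ basin F U
    · exact (h.omegaSet_subset hF hxU).trans subset_union_right
    · exact fun q hq => Or.inl ⟨hx hq, fun hqU => hxU (mem_basin_of_mem_omegaSet hF h.2.1 hq hqU)⟩
  rintro a ⟨haA, haU⟩
  rcases hA.2.2 _ hclosed hae haA with ⟨-, hnot⟩ | horb
  · exact absurd haU hnot
  · exact horb

theorem mem_of_isTopSink [μ.IsOpenPosMeasure] (hA : IsMilnorAttractor μ F A)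
    (hF : Continuous F) (h : IsTopSink F γ U) : γ ∈ A := by
  have hpos : ∃ᵐ x ∂μ, x ∈ basin F U :=
    frequently_ae_mem_iff.2 ((isOpen_basin hF h.2.1).measure_ne_zero μ ⟨γ, h.self_mem_basin⟩)
  obtain ⟨x, hxU, hxA⟩ := (hpos.and_eventually hA.2.1).exists
  exact hxA (h.self_mem_omegaSet hF hxU)

end IsMilnorAttractor

theorem IsLyapunovStable.not_mapClusterPt_iterate {X : Type*} [TopologicalSpace X] [T1Space X]
    {F G : X → X} (hFG : LeftInverse F G) {A : Set X} (hs : IsLyapunovStable F A) {p z : X}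
    (hp : p ∈ A) (hz : z ∉ A) : ¬ MapClusterPt p atTop fun n => G^[n] z := by
  intro hcl
  obtain ⟨W, hW, hAW, hstay⟩ :=
    hs {z}ᶜ isOpen_compl_singleton fun a ha (haz : a = z) => hz (haz ▸ ha)
  obtain ⟨n, hn⟩ := (mapClusterPt_iff_frequently.1 hcl W (hW.mem_nhds (hAW hp))).exists
  exact hstay _ hn n (hFG.iterate n z)

theorem stmt0_general {X : Type*} [MetricSpace X] [CompactSpace X]
    [MeasurableSpace X]
    (F : X ≃ₜ X) (μ : Measure X)
    (hμ : ∀ V : Set X, IsOpen V → V.Nonempty → 0 < μ V)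
    (A : Set X) (hA : IsMilnorAttractor μ (⇑F) A)
    (γseq : ℕ → X) (Useq : ℕ → Set X)
    (hsinks : ∀ j, IsTopSink (⇑F) (γseq j) (Useq j))
    (p : X) (hp : Tendsto γseq atTop (nhds p))
    (γ : X) (U : Set X) (hγU : IsTopSink (⇑F) γ U)
    (z : X) (hz : z ∈ basin (⇑F) U) (hznot : z ∉ orbitSet (⇑F) γ)
    (hcl : MapClusterPt p atTop fun n => (⇑F.symm)^[n] z) :
    ¬ IsLyapunovStable (⇑F) A := by
  intro hs
  have : μ.IsOpenPosMeasure := ⟨fun V hV hne => (hμ V hV hne).ne'⟩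
  have hzA : z ∉ A := fun hzA =>
    hznot (hA.inter_basin_subset_orbitSet F.continuous hγU ⟨hzA, hz⟩)
  have hpA : p ∈ A :=
    hA.1.mem_of_tendsto hp (.of_forall fun j => hA.mem_of_isTopSink F.continuous (hsinks j))
  exact hs.not_mapClusterPt_iterate F.apply_symm_apply hpA hzA hcl

/-- Abstract form of Proposition 3.1: if sinks accumulate to `p` and a point `z` of the
basin of a sink (off the orbit of the sink) has `p` as a cluster point of its backward
orbit, then the Milnor attractor is Lyapunov unstable. -/
theorem stmt0 {X : Type*} [MetricSpace X] [CompactSpace X]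
    [MeasurableSpace X] [BorelSpace X]
    (F : X ≃ₜ X) (μ : Measure X)
    (hμ : ∀ V : Set X, IsOpen V → V.Nonempty → 0 < μ V)
    (A : Set X) (hA : IsMilnorAttractor μ (⇑F) A)
    (γseq : ℕ → X) (Useq : ℕ → Set X)
    (hsinks : ∀ j, IsTopSink (⇑F) (γseq j) (Useq j))
    (p : X) (hp : Tendsto γseq atTop (nhds p))
    (γ : X) (U : Set X) (hγU : IsTopSink (⇑F) γ U)
    (z : X) (hz : z ∈ basin (⇑F) U) (hznot : z ∉ orbitSet (⇑F) γ)
    (hcl : MapClusterPt p atTop fun n => (⇑F.symm)^[n] z) :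
    ¬ IsLyapunovStable (⇑F) A :=
  stmt0_general F μ hμ A hA γseq Useq hsinks p hp γ U hγU z hz hznot hcl
end

section
/- Let X be a compact metric space, F : X ≃ₜ X a homeomorphism, and U ⊆ X an open set with F '' (closure U) ⊆ U. Then the maximal attractor A = ⋂_{n≥0} F^[n] '' (closure U) is Lyapunov stable for F: for every open set V with A ⊆ V there exists an open set W with A ⊆ W such that F^[n](x) ∈ V for every x ∈ W and every n ≥ 0. -/
/-!
The images `Kₙ = Fⁿ(closure U)` form a decreasing sequence of closed sets with intersection `A`,
so by compactness some `K_N` already lies in a given open `V ⊇ A`. Then `W = F^N(U)` is open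
(`F` is a homeomorphism), contains `K_{N+1} ⊇ A`, lies in `K_N ⊆ V`, and is forward invariant
because `U` is; hence every forward orbit starting in `W` stays in `V`.
-/

open Set Function Filter Topology

theorem IsOpenMap.iterate {X : Type*} [TopologicalSpace X] {f : X → X} (hf : IsOpenMap f) :
    ∀ n : ℕ, IsOpenMap f^[n]
  | 0 => IsOpenMap.id
  | n + 1 => (hf.iterate n).comp hf

theorem IsClosedMap.iterate {X : Type*} [TopologicalSpace X] {f : X → X} (hf : IsClosedMap f) :
    ∀ n : ℕ, IsClosedMap f^[n]
  | 0 => IsClosedMap.id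
  | n + 1 => (hf.iterate n).comp hf

theorem Set.MapsTo.antitone_image_iterate {α : Type*} {f : α → α} {s : Set α}
    (h : MapsTo f s s) : Antitone fun n => f^[n] '' s :=
  antitone_nat_of_succ_le fun n => by
    rw [iterate_succ, image_comp]
    exact image_mono h.image_subset

theorem isLyapunovStable_of_forall_exists_mapsTo {X : Type*} [TopologicalSpace X]
    {F : X → X} {K : Set X}
    (h : ∀ V : Set X, IsOpen V → K ⊆ V → ∃ W : Set X, IsOpen W ∧ K ⊆ W ∧ W ⊆ V ∧ MapsTo F W W) :
    IsLyapunovStable F K := by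
  intro V hV hKV
  obtain ⟨W, hW, hKW, hWV, hmaps⟩ := h V hV hKV
  exact ⟨W, hW, hKW, fun x hx n => hWV (hmaps.iterate n hx)⟩

/-- The maximal attractor of a trapping region is Lyapunov stable. -/
theorem stmt3 {X : Type*} [MetricSpace X] [CompactSpace X]
    (F : X ≃ₜ X) (U : Set X) (hU : IsOpen U) (htrap : (⇑F) '' closure U ⊆ U) :
    IsLyapunovStable (⇑F) (⋂ n : ℕ, (⇑F)^[n] '' closure U) := by
  refine isLyapunovStable_of_forall_exists_mapsTo fun V hV hAV => ?_
  have hmapsU : MapsTo F U U := fun x hx => htrap (mem_image_of_mem F (subset_closure hx))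
  have hmapsClosure : MapsTo F (closure U) (closure U) :=
    fun x hx => subset_closure (htrap (mem_image_of_mem F hx))
  obtain ⟨N, hNV⟩ := exists_subset_nhds_of_compactSpace
    hmapsClosure.antitone_image_iterate.directed_ge
    (fun n => F.isClosedMap.iterate n _ isClosed_closure) (fun x hx => hV.mem_nhds (hAV hx))
  refine ⟨F^[N] '' U, F.isOpenMap.iterate N U hU, ?_, (image_mono subset_closure).trans hNV,
    (Commute.iterate_self F N).mapsTo_image hmapsU⟩
  refine (iInter_subset _ (N + 1)).trans ?_
  rw [iterate_succ, image_comp]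
  exact image_mono htrap
end

section
/- Let X be a metric space, F : X → X a continuous map, and μ a Borel measure on X. If A is a Milnor attractor of F, then every point of A is nonwandering for F; equivalently, no wandering point belongs to A. -/
open Set Function Filter Topology MeasureTheory

/-- `x` is a wandering point of `F`. -/
def IsWandering {X : Type*} [TopologicalSpace X] (F : X → X) (x : X) : Prop :=
  ∃ V : Set X, IsOpen V ∧ x ∈ V ∧ ∀ n : ℕ, 1 ≤ n → (F^[n] '' V) ∩ V = ∅

/-- The Milnor attractor lies in the nonwandering set. -/
theorem stmt4 {X : Type*} [MetricSpace X] [MeasurableSpace X] [BorelSpace X]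
    (F : X → X) (hF : Continuous F) (μ : Measure X)
    (A : Set X) (hA : IsMilnorAttractor μ F A) :
    ∀ x ∈ A, ¬ IsWandering F x := by
  rintro x hx ⟨V, hVopen, hxV, hV⟩
  have key : ∀ y : X, omegaSet F y ⊆ Vᶜ := by
    intro y
    have once : ∀ m n : ℕ, m < n → F^[m] y ∈ V → F^[n] y ∉ V := by
      intro m n hmn hm hn
      have h1 : F^[n] y ∈ (F^[n-m] '' V) ∩ V := by
        refine ⟨⟨F^[m] y, hm, ?_⟩, hn⟩
        rw [← Function.iterate_add_apply]
        congr 1; omega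
      rw [hV (n-m) (by omega)] at h1
      exact h1
    obtain ⟨N, hN⟩ : ∃ N : ℕ, ∀ n ≥ N, F^[n] y ∉ V := by
      by_cases h : ∃ m, F^[m] y ∈ V
      · obtain ⟨m, hm⟩ := h
        exact ⟨m+1, fun n hn => once m n (by omega) hm⟩
      · push_neg at h
        exact ⟨0, fun n _ => h n⟩
    intro z hz
    have hz' : z ∈ closure ((fun n => F^[n] y) '' Set.Ici N) := Set.mem_iInter.1 hz N
    have hsub : ((fun n => F^[n] y) '' Set.Ici N) ⊆ Vᶜ := by
      rintro _ ⟨n, hn, rfl⟩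
      exact hN n hn
    exact closure_minimal hsub hVopen.isClosed_compl hz'
  obtain ⟨hAc, hae, hmin⟩ := hA
  have hA' : ∀ᵐ y ∂μ, omegaSet F y ⊆ A ∩ Vᶜ := by
    filter_upwards [hae] with y hy
    exact subset_inter hy (key y)
  exact (hmin (A ∩ Vᶜ) (hAc.inter hVopen.isClosed_compl) hA' hx).2 hxV
end

section
/- Let X be a compact metric space, F : X → X a continuous map, and μ a Borel measure on X with μ(V) > 0 for every nonempty open set V. Let γ be a topological sink of F with trapping neighborhood U. If A ⊆ X is a closed set such that ω(x) ⊆ A for μ-almost every x ∈ X, then the whole orbit O(γ) is contained in A. (Every hyperbolic/topological sink lies in the Milnor attractor.) -/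
open Set Function Filter Topology MeasureTheory

/-- Every topological sink lies in any closed set that contains the ω-limit sets of
almost every point (in particular, in the Milnor attractor). -/
theorem stmt5 {X : Type*} [MetricSpace X] [CompactSpace X]
    [MeasurableSpace X] [BorelSpace X]
    (F : X → X) (hF : Continuous F) (μ : Measure X)
    (hμ : ∀ V : Set X, IsOpen V → V.Nonempty → 0 < μ V)
    (γ : X) (U : Set X) (hγU : IsTopSink F γ U)
    (A : Set X) (hA : IsClosed A) (hAe : ∀ᵐ x ∂μ, omegaSet F x ⊆ A) :
    orbitSet F γ ⊆ A := by
  obtain ⟨⟨m, hm1, hmγ⟩, hUopen, horbU, hFU, hInter⟩ := hγU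
  have hγmem : γ ∈ U := horbU ⟨0, rfl⟩
  have hpos : 0 < μ U := hμ U hUopen ⟨γ, hγmem⟩
  -- find a point x ∈ U whose ω-limit set is in A
  obtain ⟨x, hxU, hxA⟩ : ∃ x, x ∈ U ∧ omegaSet F x ⊆ A := by
    by_contra h
    push_neg at h
    have hsub : U ⊆ {x | ¬ omegaSet F x ⊆ A} := fun x hx => h x hx
    have : μ U = 0 := measure_mono_null hsub (ae_iff.mp hAe)
    exact hpos.ne' this
  -- all iterates of x stay in U
  have hiter : ∀ n, F^[n] x ∈ U := by
    intro n
    induction n with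
    | zero => exact hxU
    | succ n ih =>
      rw [Function.iterate_succ_apply']
      exact hFU ⟨F^[n] x, subset_closure ih, rfl⟩
  set T : ℕ → Set X := fun N => closure ((fun n => F^[n] x) '' Set.Ici N) with hT
  have hTclosed : ∀ N, IsClosed (T N) := fun N => isClosed_closure
  have hTne : ∀ N, (T N).Nonempty := fun N => ⟨F^[N] x, subset_closure ⟨N, le_refl N, rfl⟩⟩
  have hTanti : ∀ N, T (N + 1) ⊆ T N := fun N =>
    closure_mono (Set.image_mono fun k hk => le_trans (Nat.le_succ N) hk)
  have hωne : (omegaSet F x).Nonempty := by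
    have := IsCompact.nonempty_iInter_of_sequence_nonempty_isCompact_isClosed
      T hTanti hTne ((hTclosed 0).isCompact) hTclosed
    exact this
  -- forward invariance of ω(x)
  have hωinv : ∀ y ∈ omegaSet F x, F y ∈ omegaSet F x := by
    intro y hy
    rw [omegaSet, Set.mem_iInter] at hy ⊢
    intro N
    have h1 : F y ∈ closure (F '' ((fun n => F^[n] x) '' Set.Ici N)) :=
      image_closure_subset_closure_image hF ⟨y, hy N, rfl⟩
    refine closure_mono ?_ h1
    rintro _ ⟨_, ⟨k, hk, rfl⟩, rfl⟩
    exact ⟨k + 1, le_trans hk (Nat.le_succ k), by simp [Function.iterate_succ_apply']⟩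
  -- ω(x) ⊆ orbit of γ
  have hωorb : omegaSet F x ⊆ orbitSet F γ := by
    rw [← hInter]
    intro z hz
    rw [Set.mem_iInter]
    intro n
    rw [omegaSet, Set.mem_iInter] at hz
    have hz' := hz (n + 1)
    have hsub : (fun k => F^[k] x) '' Set.Ici (n + 1) ⊆ F^[n] '' (F '' closure U) := by
      rintro _ ⟨k, hk, rfl⟩
      have hk' : n + 1 ≤ k := hk
      refine ⟨F (F^[k - n - 1] x), ⟨F^[k - n - 1] x, subset_closure (hiter _), rfl⟩, ?_⟩
      show F^[n] (F (F^[k - n - 1] x)) = F^[k] x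
      rw [← Function.iterate_succ_apply' F (k - n - 1) x, ← Function.iterate_add_apply]
      congr 1
      omega
    have hcpt : IsCompact (F^[n] '' (F '' closure U)) :=
      (isClosed_closure.isCompact.image hF).image (hF.iterate n)
    have : z ∈ F^[n] '' (F '' closure U) := hcpt.isClosed.closure_subset_iff.mpr hsub hz'
    exact Set.image_mono hFU this
  -- iterated forward invariance
  have hωiter : ∀ j, ∀ y ∈ omegaSet F x, F^[j] y ∈ omegaSet F x := by
    intro j
    induction j with
    | zero => intro y hy; exact hy
    | succ j ih =>
      intro y hy
      rw [Function.iterate_succ_apply']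
      exact hωinv _ (ih y hy)
  -- γ ∈ ω(x)
  obtain ⟨y, hy⟩ := hωne
  obtain ⟨i, hi⟩ := hωorb hy
  have hγω : γ ∈ omegaSet F x := by
    have h1 : F^[i * (m - 1)] y ∈ omegaSet F x := hωiter _ y hy
    have h2 : F^[i * (m - 1)] y = γ := by
      rw [← hi, ← Function.iterate_add_apply]
      have : i * (m - 1) + i = m * i := by
        rcases m with _ | m
        · omega
        · rw [Nat.succ_sub_one]; ring
      rw [this, Function.iterate_mul]
      exact Function.iterate_fixed hmγ i
    rwa [h2] at h1
  -- conclude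
  rintro _ ⟨j, rfl⟩
  exact hxA (hωiter j γ hγω)
end

section
/- Let X be a compact metric space, F : X → X a continuous map, and U ⊆ X an open set with F '' (closure U) ⊆ U. Let Λ = ⋂_{n≥0} F^[n] '' (closure U). Then every point u ∈ U with u ∉ Λ is wandering for F. (Points of a trapping region not on the maximal attractor are wandering; in particular, all points of the basin of a sink other than the periodic orbit itself are wandering.) -/
/-! If `u ∉ F^[N] '' closure U`, the open set `U \ F^[N] '' closure U` is mapped by every `F^[n]`,
`n ≥ N`, into the closed set `F^[N] '' closure U`, because these images decrease in `n`.
The finitely many return times `1 ≤ n < N` are excluded by shrinking the neighbourhood: `u` is not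
periodic, since a periodic point of `closure U` lies in every `F^[N] '' closure U`, so
`F^[n] u ≠ u` and continuity separates a small neighbourhood of `u` from its `F^[n]`-image. -/

open Set Function Filter Topology

namespace Set.MapsTo

variable {α : Type*} {F : α → α} {s : Set α}

theorem antitone_iterate_image (hs : MapsTo F s s) : Antitone fun n ↦ F^[n] '' s := by
  simpa only [image_iterate_eq] using
    Monotone.antitone_iterate_of_map_le (fun _ _ ↦ image_mono) hs.image_subset

theorem notMem_periodicPts_of_notMem_iterate_image (hs : MapsTo F s s) {x : α} (hx : x ∈ s)
    {N : ℕ} (hN : x ∉ F^[N] '' s) : x ∉ periodicPts F := by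
  rintro ⟨n, hn, hper⟩
  exact hN (hs.antitone_iterate_image (Nat.le_mul_of_pos_left N hn) ⟨x, hx, hper.mul_const N⟩)

end Set.MapsTo

section Wandering

variable {X : Type*} [TopologicalSpace X] {F : X → X} {x : X}

theorem isWandering_of_eventually_smallSets
    (h : ∀ᶠ V in (𝓝 x).smallSets, ∀ n, 1 ≤ n → Disjoint (F^[n] '' V) V) : IsWandering F x := by
  obtain ⟨V, hV, hdisj⟩ := eventually_smallSets.1 h
  obtain ⟨W, hWV, hW, hxW⟩ := mem_nhds_iff.1 hV
  exact ⟨W, hW, hxW, fun n hn ↦ disjoint_iff_inter_eq_empty.1 (hdisj W hWV n hn)⟩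

theorem eventually_smallSets_disjoint_image [T2Space X] {g : X → X} (hg : Continuous g)
    (hx : g x ≠ x) : ∀ᶠ W in (𝓝 x).smallSets, Disjoint (g '' W) W := by
  refine (eventually_smallSets' fun _ _ hst h ↦ h.mono (image_mono hst) hst).2 ?_
  obtain ⟨A, B, hA, hB, hgxA, hxB, hAB⟩ := t2_separation hx
  refine ⟨B ∩ g ⁻¹' A, inter_mem (hB.mem_nhds hxB) (hg.continuousAt.preimage_mem_nhds
    (hA.mem_nhds hgxA)), ?_⟩
  exact hAB.mono (image_subset_iff.2 inter_subset_right) inter_subset_left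

theorem isWandering_of_notMem_periodicPts [T2Space X] (hF : Continuous F)
    (hx : x ∉ periodicPts F) {V : Set X} (hV : V ∈ 𝓝 x) {N : ℕ}
    (hVN : ∀ n, N ≤ n → Disjoint (F^[n] '' V) V) : IsWandering F x := by
  have hearly : ∀ n ∈ Finset.Ico 1 N, ∀ᶠ W in (𝓝 x).smallSets, Disjoint (F^[n] '' W) W :=
    fun n hn ↦ eventually_smallSets_disjoint_image (hF.iterate n)
      fun h ↦ hx ⟨n, (Finset.mem_Ico.1 hn).1, h⟩
  refine isWandering_of_eventually_smallSets ?_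
  filter_upwards [(eventually_all_finset _).2 hearly, eventually_smallSets_subset.2 hV]
    with W hW hWV n hn
  by_cases hnN : n < N
  · exact hW n (Finset.mem_Ico.2 ⟨hn, hnN⟩)
  · exact (hVN n (not_lt.1 hnN)).mono (image_mono hWV) hWV

end Wandering

/-- Points of a trapping region that are not on the maximal attractor are wandering. -/
theorem stmt6 {X : Type*} [MetricSpace X] [CompactSpace X]
    (F : X → X) (hF : Continuous F)
    (U : Set X) (hU : IsOpen U) (htrap : F '' closure U ⊆ U) :
    ∀ u ∈ U, u ∉ (⋂ n : ℕ, F^[n] '' closure U) → IsWandering F u := by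
  intro u hu hΛ
  obtain ⟨N, hN⟩ : ∃ N, u ∉ F^[N] '' closure U := by simpa using hΛ
  have hmaps : MapsTo F (closure U) (closure U) := fun _ hx ↦
    subset_closure (htrap (mem_image_of_mem F hx))
  have hK : IsClosed (F^[N] '' closure U) :=
    (isClosed_closure.isCompact.image (hF.iterate N)).isClosed
  refine isWandering_of_notMem_periodicPts hF
    (hmaps.notMem_periodicPts_of_notMem_iterate_image (subset_closure hu) hN)
    ((hU.sdiff hK).mem_nhds ⟨hu, hN⟩) (N := N) fun n hn ↦ ?_
  have hinto : F^[n] '' (U \ F^[N] '' closure U) ⊆ F^[N] '' closure U :=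
    (image_mono (sdiff_subset.trans subset_closure)).trans (hmaps.antitone_iterate_image hn)
  exact disjoint_sdiff_right.mono_left hinto
end

section
/- Let X be a metric space, F : X ≃ₜ X a homeomorphism, A ⊆ X a closed set, p ∈ A, and z ∈ X with z ∉ A. If p is a cluster point of the backward orbit ((F⁻¹)^[n](z))_{n∈ℕ} of z, then A is not Lyapunov stable for F. (The key instability mechanism of Proposition 3.1: a point off the attractor whose backward orbit accumulates on the attractor destroys Lyapunov stability.) -/
/-
If `z ∉ K`, stability applied to the open set `{z}ᶜ ⊇ K` gives a neighbourhood `W` of `K`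
whose forward orbits never reach `z`. A backward orbit of `z` is the exact opposite: its
`n`-th point is sent to `z` by `f^[n]`, so it can never enter `W`, and in particular cannot
accumulate at a point of `K`.
-/

open Set Function Filter Topology

namespace IsLyapunovStable

variable {X : Type*} [TopologicalSpace X] {f : X → X} {K : Set X}

theorem exists_isOpen_forall_iterate_ne [T1Space X] (hK : IsLyapunovStable f K) {z : X}
    (hz : z ∉ K) : ∃ W : Set X, IsOpen W ∧ K ⊆ W ∧ ∀ x ∈ W, ∀ n : ℕ, f^[n] x ≠ z :=
  hK {z}ᶜ isOpen_compl_singleton fun _ hx hxz => hz (hxz ▸ hx)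

theorem not_mapClusterPt_iterate_of_leftInverse [T1Space X] (hK : IsLyapunovStable f K)
    {g : X → X} (hfg : LeftInverse f g) {p z : X} (hp : p ∈ K) (hz : z ∉ K) :
    ¬ MapClusterPt p atTop fun n => g^[n] z := by
  intro hcl
  obtain ⟨W, hWopen, hKW, hW⟩ := hK.exists_isOpen_forall_iterate_ne hz
  obtain ⟨n, hn⟩ := (mapClusterPt_iff_frequently.mp hcl W (hWopen.mem_nhds (hKW hp))).exists
  exact hW _ hn n (hfg.iterate n z)

end IsLyapunovStable

theorem stmt7_general {X : Type*} [MetricSpace X]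
    (F : X ≃ₜ X) (A : Set X)
    (p : X) (hp : p ∈ A) (z : X) (hz : z ∉ A)
    (hcl : MapClusterPt p atTop fun n => (⇑F.symm)^[n] z) :
    ¬ IsLyapunovStable (⇑F) A := fun hA =>
  hA.not_mapClusterPt_iterate_of_leftInverse F.apply_symm_apply hp hz hcl

/-- A point off a closed set whose backward orbit accumulates on the set destroys its
Lyapunov stability. -/
theorem stmt7 {X : Type*} [MetricSpace X]
    (F : X ≃ₜ X) (A : Set X) (hA : IsClosed A)
    (p : X) (hp : p ∈ A) (z : X) (hz : z ∉ A)
    (hcl : MapClusterPt p atTop fun n => (⇑F.symm)^[n] z) :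
    ¬ IsLyapunovStable (⇑F) A :=
  stmt7_general F A p hp z hz hcl
end

section
/- Define f : ℝ → ℝ by f(x) = x + (1 − cos x)/10. Then for every x ∈ ℝ there exists k ∈ ℤ such that the sequence of iterates f^[n](x) converges to 2πk as n → ∞. (Every orbit of the circle diffeomorphism x ↦ x + 0.1(1 − cos x) converges to the semistable fixed point; the Milnor attractor of this map is the single point 0 on the circle.) -/
open Function Filter Topology

private lemma key_ineq (t : ℝ) (ht : 0 ≤ t) : (1 - Real.cos t) / 10 ≤ t := by
  rcases le_or_gt t 1 with h | h
  · have h1 : 1 - t ^ 2 / 2 ≤ Real.cos t := Real.one_sub_sq_div_two_le_cos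
    nlinarith
  · have h2 : -1 ≤ Real.cos t := Real.neg_one_le_cos t
    nlinarith

/-- Every orbit of `x ↦ x + (1 - cos x)/10` converges to a fixed point `2πk`, `k ∈ ℤ`. -/
theorem stmt8 (f : ℝ → ℝ) (hf : ∀ x, f x = x + (1 - Real.cos x) / 10) :
    ∀ x : ℝ, ∃ k : ℤ,
      Tendsto (fun n => f^[n] x) atTop (nhds (2 * Real.pi * (k : ℝ))) := by
  intro x
  -- f is continuous
  have hfc : Continuous f := by
    have : f = fun x => x + (1 - Real.cos x) / 10 := funext hf
    rw [this]; continuity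
  -- f x ≥ x
  have hge : ∀ y, y ≤ f y := by
    intro y
    rw [hf]
    have := Real.cos_le_one y
    linarith
  -- invariance: y ≤ 2πk → f y ≤ 2πk
  have hinv : ∀ (k : ℤ) (y : ℝ), y ≤ 2 * Real.pi * k → f y ≤ 2 * Real.pi * k := by
    intro k y hy
    rw [hf]
    set t := 2 * Real.pi * k - y with hts
    have ht : 0 ≤ t := by linarith
    have hcos : Real.cos y = Real.cos t := by
      have hy2 : y = (k:ℝ) * (2 * Real.pi) - t := by rw [hts]; ring
      rw [hy2, Real.cos_int_mul_two_pi_sub]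
    have := key_ineq t ht
    rw [hcos]; linarith
  -- choose bound k₀
  obtain ⟨k₀, hk₀⟩ : ∃ k : ℤ, x ≤ 2 * Real.pi * k := by
    obtain ⟨k, hk⟩ := exists_int_gt (x / (2 * Real.pi))
    refine ⟨k, ?_⟩
    have hπ : (0:ℝ) < 2 * Real.pi := by positivity
    calc x = x / (2 * Real.pi) * (2 * Real.pi) := by field_simp
    _ ≤ k * (2 * Real.pi) := by nlinarith
    _ = 2 * Real.pi * k := by ring
  -- sequence bounded above by 2πk₀
  have hbd : ∀ n, f^[n] x ≤ 2 * Real.pi * k₀ := by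
    intro n
    induction n with
    | zero => simpa using hk₀
    | succ n ih => rw [Function.iterate_succ_apply']; exact hinv k₀ _ ih
  -- monotone
  have hmono : Monotone fun n => f^[n] x := by
    apply monotone_nat_of_le_succ
    intro n
    rw [Function.iterate_succ_apply']
    exact hge _
  -- converges to sup
  have hba : BddAbove (Set.range fun n => f^[n] x) := ⟨2 * Real.pi * k₀, by rintro _ ⟨n, rfl⟩; exact hbd n⟩
  set L := ⨆ n, f^[n] x with hL
  have hlim : Tendsto (fun n => f^[n] x) atTop (nhds L) := tendsto_atTop_ciSup hmono hba
  -- L is a fixed point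
  have hfix : f L = L := by
    have h1 : Tendsto (fun n => f^[n+1] x) atTop (nhds L) := hlim.comp (tendsto_add_atTop_nat 1)
    have h2 : Tendsto (fun n => f (f^[n] x)) atTop (nhds (f L)) := (hfc.tendsto L).comp hlim
    have : (fun n => f^[n+1] x) = fun n => f (f^[n] x) := by
      funext n; rw [Function.iterate_succ_apply']
    rw [this] at h1
    exact tendsto_nhds_unique h2 h1
  have hcosL : Real.cos L = 1 := by
    rw [hf] at hfix
    have : (1 - Real.cos L) / 10 = 0 := by linarith
    have := Real.cos_le_one L
    linarith
  obtain ⟨m, hm⟩ := (Real.cos_eq_one_iff L).1 hcosL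
  exact ⟨m, by rw [show 2 * Real.pi * (m:ℝ) = (m:ℝ) * (2 * Real.pi) by ring, hm]; exact hlim⟩
end

section
/- Define f : ℝ → ℝ by f(x) = x + (1 − cos x)/10. Then for every x with 0 < x < 2π, the sequence of iterates f^[n](x) converges to 2π as n → ∞. (This expresses the Lyapunov instability of the fixed point 0 for the induced circle map: points arbitrarily close to 0 on one side travel all the way to 2π.) -/
open Function Filter Topology

/-!
The map is monotone with `y < f y` on `(0, 2π)` and `f (2π) = 2π`, so an orbit starting in
`(0, 2π)` increases and stays below `2π`. Its limit is a fixed point of `f` in `(0, 2π]`, and the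
only one is `2π`.
-/

theorem Monotone.tendsto_iterate_of_lt_map {α : Type*} [ConditionallyCompleteLinearOrder α]
    [TopologicalSpace α] [OrderTopology α] {f : α → α} (hmono : Monotone f)
    (hcont : Continuous f) {x b : α} (hb : f b = b) (hxb : x ≤ b)
    (hlt : ∀ y ∈ Set.Ico x b, y < f y) : Tendsto (fun n => f^[n] x) atTop (𝓝 b) := by
  have hx : x ≤ f x := by
    rcases hxb.lt_or_eq with hxb | rfl
    · exact (hlt x ⟨le_rfl, hxb⟩).le
    · exact hb.ge
  have horbit : Monotone fun n => f^[n] x := hmono.monotone_iterate_of_le_map hx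
  have hle : ∀ n, f^[n] x ≤ b := fun n => iterate_fixed hb n ▸ hmono.iterate n hxb
  have hbdd : BddAbove (Set.range fun n => f^[n] x) := ⟨b, by rintro _ ⟨n, rfl⟩; exact hle n⟩
  have hL := tendsto_atTop_ciSup horbit hbdd
  have hfix : f (⨆ n, f^[n] x) = ⨆ n, f^[n] x :=
    isFixedPt_of_tendsto_iterate hL hcont.continuousAt
  have hxL : x ≤ ⨆ n, f^[n] x := le_ciSup hbdd 0
  obtain hLb | hLb := (ciSup_le hle).lt_or_eq
  · exact absurd hfix (hlt _ ⟨hxL, hLb⟩).ne'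
  · rwa [hLb] at hL

namespace Real

theorem cos_lt_one_of_pos_of_lt_two_pi {x : ℝ} (hx₀ : 0 < x) (hx₂ : x < 2 * π) : cos x < 1 :=
  (cos_le_one x).lt_of_ne fun h =>
    hx₀.ne' ((cos_eq_one_iff_of_lt_of_lt (by linarith [pi_pos]) hx₂).1 h)

/-- Since `cos` is `1`-Lipschitz, adding `c (1 - cos x)` with `c ≤ 1` cannot reverse the order. -/
theorem monotone_of_eq_add_mul_one_sub_cos {f : ℝ → ℝ} {c : ℝ} (hc₀ : 0 ≤ c) (hc₁ : c ≤ 1)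
    (hf : ∀ x, f x = x + c * (1 - cos x)) : Monotone f := by
  intro u v huv
  have hcos : cos v - cos u ≤ v - u :=
    (le_abs_self _).trans ((abs_cos_sub_cos_le v u).trans (abs_of_nonneg (sub_nonneg.2 huv)).le)
  rw [hf, hf]
  nlinarith [mul_le_mul_of_nonneg_left hcos hc₀]

end Real

/-- For `f x = x + (1 - cos x)/10`, every orbit starting in `(0, 2π)` converges to `2π`:
Lyapunov instability of the semistable fixed point `0` of the induced circle map. -/
theorem stmt9 (f : ℝ → ℝ) (hf : ∀ x, f x = x + (1 - Real.cos x) / 10) :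
    ∀ x : ℝ, 0 < x → x < 2 * Real.pi →
      Tendsto (fun n => f^[n] x) atTop (nhds (2 * Real.pi)) := by
  intro x hx₀ hx₂
  have hmono : Monotone f :=
    Real.monotone_of_eq_add_mul_one_sub_cos (c := 1 / 10) (by norm_num) (by norm_num)
      fun y => by rw [hf]; ring
  have hcont : Continuous f := funext hf ▸ by fun_prop
  have hfix : f (2 * Real.pi) = 2 * Real.pi := by rw [hf, Real.cos_two_pi]; ring
  refine hmono.tendsto_iterate_of_lt_map hcont hfix hx₂.le fun y ⟨hxy, hy₂⟩ => ?_
  have := Real.cos_lt_one_of_pos_of_lt_two_pi (hx₀.trans_le hxy) hy₂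
  rw [hf]
  linarith
end

section
/- Let λ, σ be real numbers with σ > 0, let n ≥ 1 be a natural number and μ ∈ ℝ. Define F : ℝ² → ℝ² by F(x, y) = (σ^n·y, μ − λ^n·x + (σ^n·y − 1)²) and set ν = σ^(2n)·(μ − σ^(−n) − λ^n). Then for all X, Y ∈ ℝ, letting (x, y) = (σ^(−n)·X + 1, σ^(−2n)·Y + σ^(−n)) (the inverse of the rescaling H_n(x,y) = (σ^n(x − 1), σ^(2n)(y − σ^(−n)))), one has H_n(F(x, y)) = (Y, Y² − (λσ)^n·X + ν). (The renormalization identity: in the rescaled coordinates the return map becomes (X,Y) ↦ (Y, Y² − (λσ)^n X + ν).) -/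
open Function Filter Topology

/-! With `s = σ^n` and `a = λ^n` everything is an identity in the field generated by `a`, `s`,
`μ`, `X`, `Y`: after the substitution `y = s⁻²Y + s⁻¹` one has `s y - 1 = s⁻¹ Y`, so the square
in the return map becomes `s⁻² Y²`, and multiplying by `s²` produces the quadratic family. -/

section Renormalization

variable {K : Type*} [Field K]

def returnMap (a s μ : K) (p : K × K) : K × K :=
  (s * p.2, μ - a * p.1 + (s * p.2 - 1) ^ 2)

def rescale (s : K) (p : K × K) : K × K :=
  (s * (p.1 - 1), s ^ 2 * (p.2 - s⁻¹))

def rescaleInv (s : K) (p : K × K) : K × K :=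
  (s⁻¹ * p.1 + 1, (s ^ 2)⁻¹ * p.2 + s⁻¹)

theorem rescale_returnMap_rescaleInv (a μ X Y : K) {s : K} (hs : s ≠ 0) :
    rescale s (returnMap a s μ (rescaleInv s (X, Y))) =
      (Y, Y ^ 2 - a * s * X + s ^ 2 * (μ - s⁻¹ - a)) := by
  simp only [rescale, returnMap, rescaleInv, Prod.mk.injEq]
  constructor <;> field_simp <;> ring

end Renormalization

theorem stmt11_general (l σ : ℝ) (hσ : 0 < σ) (n : ℕ) (μ : ℝ)
    (F : ℝ × ℝ → ℝ × ℝ)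
    (hF : F = fun p => (σ ^ n * p.2, μ - l ^ n * p.1 + (σ ^ n * p.2 - 1) ^ 2))
    (H : ℝ × ℝ → ℝ × ℝ)
    (hH : H = fun p => (σ ^ n * (p.1 - 1), σ ^ (2 * n) * (p.2 - σ ^ (-(n : ℤ)))))
    (ν : ℝ) (hν : ν = σ ^ (2 * n) * (μ - σ ^ (-(n : ℤ)) - l ^ n)) :
    ∀ X Y : ℝ,
      H (F (σ ^ (-(n : ℤ)) * X + 1, σ ^ (-(2 * (n : ℤ))) * Y + σ ^ (-(n : ℤ)))) =
        (Y, Y ^ 2 - (l * σ) ^ n * X + ν) := by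
  intro X Y
  subst hF hH hν
  have hpow : σ ^ (2 * n) = (σ ^ n) ^ 2 := by ring
  have hzpow : σ ^ (-(n : ℤ)) = (σ ^ n)⁻¹ := by rw [zpow_neg, zpow_natCast]
  have hzpow₂ : σ ^ (-(2 * (n : ℤ))) = ((σ ^ n) ^ 2)⁻¹ := by
    rw [zpow_neg, ← hpow]; norm_cast
  rw [hpow, hzpow, hzpow₂, mul_pow]
  exact rescale_returnMap_rescaleInv (l ^ n) μ X Y (pow_ne_zero n hσ.ne')

/-- The renormalization identity: in the rescaled coordinates given by
`H_n(x, y) = (σ^n (x - 1), σ^{2n} (y - σ^{-n}))`, the return map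
`F(x, y) = (σ^n y, μ - λ^n x + (σ^n y - 1)²)` becomes
`(X, Y) ↦ (Y, Y² - (λσ)^n X + ν)` with `ν = σ^{2n} (μ - σ^{-n} - λ^n)`. -/
theorem stmt11 (l σ : ℝ) (hσ : 0 < σ) (n : ℕ) (hn : 1 ≤ n) (μ : ℝ)
    (F : ℝ × ℝ → ℝ × ℝ)
    (hF : F = fun p => (σ ^ n * p.2, μ - l ^ n * p.1 + (σ ^ n * p.2 - 1) ^ 2))
    (H : ℝ × ℝ → ℝ × ℝ)
    (hH : H = fun p => (σ ^ n * (p.1 - 1), σ ^ (2 * n) * (p.2 - σ ^ (-(n : ℤ)))))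
    (ν : ℝ) (hν : ν = σ ^ (2 * n) * (μ - σ ^ (-(n : ℤ)) - l ^ n)) :
    ∀ X Y : ℝ,
      H (F (σ ^ (-(n : ℤ)) * X + 1, σ ^ (-(2 * (n : ℤ))) * Y + σ ^ (-(n : ℤ)))) =
        (Y, Y ^ 2 - (l * σ) ^ n * X + ν) :=
  stmt11_general l σ hσ n μ F hF H hH ν hν
end

section
/- Let E be a real normed vector space, A ∈ E, and let ν be a real number with −3/4 < ν < 1/4. Set a = (1 − √(1 − 4ν))/2 and r = (1 + √(1 − 4ν))/2, and define G : E × ℝ → E × ℝ by G(X, Y) = (Y • A, Y² + ν). Then G(a • A, a) = (a • A, a), and for every (X, Y) ∈ E × ℝ with |Y| < r, the iterates G^[n](X, Y) converge to (a • A, a) as n → ∞. (The limit map 𝒢_ν of the renormalization scheme has an attracting fixed point whose basin contains the strip {|Y| < r_ν}.) -/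
open Function Filter Topology

private theorem Pupper (a z : ℝ) (ha1 : -1/2 < a) (ha2 : a < 1/2)
    (hz2 : z < 1 - a) :
    (z + a) * (z^2 + (a - a^2) + a) < 1 := by
  have key : (z + a) * (z^2 + (a - a^2) + a) - 1 = (z - (1-a)) * (z^2 + z + 1 + (a - a^2)) := by ring
  have hq : 0 < z^2 + z + 1 + (a - a^2) := by
    nlinarith [sq_nonneg (z + 1/2), sq_nonneg (a + 1/2), sq_nonneg (a - 3/2)]
  have hneg : z - (1-a) < 0 := by linarith
  nlinarith [mul_neg_of_neg_of_pos hneg hq]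

private theorem Plower (a z : ℝ) (ha1 : -1/2 < a) (ha2 : a < 1/2)
    (hz1 : a - a^2 ≤ z) (hz2 : z < 1 - a) :
    -1 < (z + a) * (z^2 + (a - a^2) + a) := by
  rcases le_or_gt 0 a with hc | hc
  · have hu : 0 ≤ z + a := by nlinarith
    have ht : 0 ≤ z^2 + (a - a^2) + a := by nlinarith [sq_nonneg z]
    nlinarith [mul_nonneg hu ht]
  · rcases le_or_gt z (-a) with hz | hz
    · have hzsq : z^2 ≤ (a - a^2)^2 := by
        nlinarith [mul_nonneg (sub_nonneg.mpr hz1) (by nlinarith : (0:ℝ) ≤ -(a - a^2) - z)]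
      have hbr : 0 < a*(1-a)^2 + 2 - a := by nlinarith [sq_nonneg (1-a)]
      have hkey : (a - a^2)^2 + (a - a^2) + a = a * (a*(1-a)^2 + 2 - a) := by ring
      have ht : z^2 + (a - a^2) + a ≤ 0 := by
        nlinarith [mul_nonpos_of_nonpos_of_nonneg hc.le hbr.le]
      have hu : z + a ≤ 0 := by linarith
      nlinarith [mul_nonneg (neg_nonneg.mpr hu) (neg_nonneg.mpr ht)]
    · rcases le_or_gt 0 (z^2 + (a - a^2) + a) with ht | ht
      · nlinarith [mul_nonneg (by linarith : (0:ℝ) ≤ z + a) ht]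
      · have hB : z^2 ≤ a^2 - 2*a := by nlinarith
        have h1 : z * (a^2 - 2*a) ≤ ((a^2-2*a) + (a^2-2*a)^2)/2 := by
          nlinarith [sq_nonneg (z - (a^2 - 2*a))]
        have h2 : (z + a) * (a^2 - 2*a) < 1 := by nlinarith [sq_nonneg a, sq_nonneg (a+1/2)]
        nlinarith [mul_pos (by linarith : (0:ℝ) < z + a)
          (by linarith : (0:ℝ) < -(z^2 + (a - a^2) + a))]

set_option maxHeartbeats 1000000 in
/-- The limit map `𝒢_ν(X, Y) = (Y • A, Y² + ν)` of the renormalization scheme has an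
attracting fixed point `(a • A, a)` whose basin contains the strip `{|Y| < r}`. -/
theorem stmt14 {E : Type*} [NormedAddCommGroup E] [NormedSpace ℝ E] (A : E)
    (ν : ℝ) (h1 : -3/4 < ν) (h2 : ν < 1/4)
    (a r : ℝ) (ha : a = (1 - Real.sqrt (1 - 4 * ν)) / 2)
    (hr : r = (1 + Real.sqrt (1 - 4 * ν)) / 2)
    (G : E × ℝ → E × ℝ) (hG : ∀ (X : E) (Y : ℝ), G (X, Y) = (Y • A, Y ^ 2 + ν)) :
    G (a • A, a) = (a • A, a) ∧
      ∀ p : E × ℝ, |p.2| < r →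
        Tendsto (fun n => G^[n] p) atTop (nhds (a • A, a)) := by
  have h4 : (0:ℝ) < 1 - 4 * ν := by linarith
  have hs0 : 0 < Real.sqrt (1 - 4 * ν) := Real.sqrt_pos.mpr h4
  have hs2 : (Real.sqrt (1 - 4 * ν))^2 = 1 - 4 * ν := Real.sq_sqrt h4.le
  have hs4 : Real.sqrt (1 - 4 * ν) < 2 := by nlinarith
  have ha1 : -1/2 < a := by rw [ha]; linarith
  have ha2 : a < 1/2 := by rw [ha]; linarith
  have hra : r = 1 - a := by rw [ha, hr]; ring
  have hν : ν = a - a^2 := by rw [ha]; linear_combination hs2 / 4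
  have hfix : a^2 + ν = a := by linarith [hν]
  constructor
  · rw [hG, hfix]
  · rintro ⟨X, Y⟩ hp
    simp only at hp
    set y : ℕ → ℝ := fun n => (fun w => w^2 + ν)^[n] Y with hy
    have hy0 : y 0 = Y := rfl
    have hstep : ∀ n, y (n + 1) = (y n)^2 + ν := by
      intro n
      simp only [hy, Function.iterate_succ_apply']
    set ρ : ℝ := max (max |Y| |ν|) ((a + r)/2) with hρ
    have hνabs : |ν| < r := by
      rw [abs_lt]
      constructor <;> nlinarith [sq_nonneg a]
    have hρr : ρ < r := by
      apply max_lt (max_lt hp hνabs)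
      linarith
    have hρa : a ≤ ρ := le_trans (by linarith) (le_max_right _ _)
    have hρν : |ν| ≤ ρ := le_trans (le_max_right _ _) (le_max_left _ _)
    have hρY : |Y| ≤ ρ := le_trans (le_max_left _ _) (le_max_left _ _)
    have hνρ : ν ≤ ρ := le_trans (le_abs_self ν) hρν
    have hbd : ∀ n, |y n| ≤ ρ := by
      intro n
      induction n with
      | zero => exact hρY
      | succ n ih =>
        rw [hstep, abs_le]
        have h := abs_le.mp ih
        have hprod : (ρ - a) * (ρ - r) ≤ 0 :=
          mul_nonpos_of_nonneg_of_nonpos (by linarith) (by linarith)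
        have hsq : (y n)^2 ≤ ρ^2 := sq_le_sq' h.1 h.2
        have hρρ : ρ^2 + ν ≤ ρ := by nlinarith [hprod]
        constructor
        · linarith [sq_nonneg (y n), neg_abs_le ν, hρν]
        · linarith
    have hmem : ∀ n, y (n+1) ∈ Set.Icc ν ρ := by
      intro n
      rw [hstep]
      constructor
      · linarith [sq_nonneg (y n)]
      · have h := abs_le.mp (hbd n)
        have hprod : (ρ - a) * (ρ - r) ≤ 0 :=
          mul_nonpos_of_nonneg_of_nonpos (by linarith) (by linarith)
        have hsq : (y n)^2 ≤ ρ^2 := sq_le_sq' h.1 h.2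
        nlinarith [hprod]
    -- contraction factor on [ν, ρ]
    obtain ⟨z₀, hz₀, hmax⟩ := isCompact_Icc.exists_isMaxOn (f := fun z => |(z + a) * (z^2 + ν + a)|)
      ⟨ν, le_refl ν, hνρ⟩ (by fun_prop)
    set c : ℝ := |(z₀ + a) * (z₀^2 + ν + a)| with hc
    have hc0 : 0 ≤ c := abs_nonneg _
    have hc1 : c < 1 := by
      rw [hc, abs_lt]
      obtain ⟨hz₀1, hz₀2⟩ := hz₀
      have hz₀r : z₀ < 1 - a := by linarith [hρr, hra]
      constructor
      · have := Plower a z₀ ha1 ha2 (by linarith [hν]) hz₀r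
        nlinarith [hν]
      · have := Pupper a z₀ ha1 ha2 hz₀r
        nlinarith [hν]
    have hkey : ∀ n, |y (n+3) - a| ≤ c * |y (n+1) - a| := by
      intro n
      have h1 : y (n+3) - a = (y (n+1) - a) * ((y (n+1) + a) * ((y (n+1))^2 + ν + a)) := by
        have e1 := hstep (n+1)
        have e2 := hstep (n+2)
        have e3 : n + 2 + 1 = n + 3 := rfl
        rw [e3] at e2
        rw [e2, e1]
        linear_combination ((y (n+1))^2 + ν + 1 + a) * hfix
      rw [h1, abs_mul]
      rw [mul_comm c _]
      apply mul_le_mul_of_nonneg_left _ (abs_nonneg _)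
      exact hmax (hmem n)
    -- geometric decay
    set q : ℝ := (c + 1)/2 with hq
    have hq0 : 0 < q := by rw [hq]; linarith
    have hq1 : q < 1 := by rw [hq]; linarith
    have hcq : c ≤ q^2 := by rw [hq]; nlinarith [sq_nonneg (c - 1)]
    set C : ℝ := (|y 1 - a| + |y 2 - a| + 1)/q^2 with hC
    have hq2 : 0 < q^2 := by positivity
    have hCb : ∀ k, |y (2*k+1) - a| ≤ C * q^(2*k+1) ∧ |y (2*k+2) - a| ≤ C * q^(2*k+2) := by
      intro k
      induction k with
      | zero =>
        have hq2q : q^2 ≤ q := by nlinarith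
        constructor
        · show |y 1 - a| ≤ C * q ^ 1
          rw [hC, pow_one, div_mul_eq_mul_div, le_div_iff₀ hq2]
          linarith [mul_le_mul_of_nonneg_left hq2q (abs_nonneg (y 1 - a)),
            mul_nonneg (by positivity : (0:ℝ) ≤ |y 2 - a| + 1) hq0.le]
        · show |y 2 - a| ≤ C * q ^ 2
          rw [hC, div_mul_eq_mul_div, le_div_iff₀ hq2]
          linarith [mul_nonneg (by positivity : (0:ℝ) ≤ |y 1 - a| + 1) hq2.le]
      | succ k ih =>
        obtain ⟨ih1, ih2⟩ := ih
        have e1 : 2*(k+1)+1 = (2*k+1) + 2 := by ring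
        have e2 : 2*(k+1)+2 = (2*k+2) + 2 := by ring
        constructor
        · rw [e1]
          calc |y (2*k+1+2) - a| = |y (2*k+3) - a| := by norm_num
            _ ≤ c * |y (2*k+1) - a| := hkey (2*k)
            _ ≤ q^2 * (C * q^(2*k+1)) := by
                apply mul_le_mul hcq ih1 (abs_nonneg _) (le_of_lt hq2)
            _ = C * q^(2*k+1+2) := by ring
        · rw [e2]
          calc |y (2*k+2+2) - a| = |y (2*k+1+3) - a| := by norm_num
            _ ≤ c * |y (2*k+1+1) - a| := hkey (2*k+1)
            _ = c * |y (2*k+2) - a| := by norm_num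
            _ ≤ q^2 * (C * q^(2*k+2)) := by
                apply mul_le_mul hcq ih2 (abs_nonneg _) (le_of_lt hq2)
            _ = C * q^(2*k+2+2) := by ring
    have hall : ∀ n, |y (n+1) - a| ≤ C * q^(n+1) := by
      intro n
      rcases Nat.even_or_odd n with ⟨k, hk⟩ | ⟨k, hk⟩
      · have : n + 1 = 2*k + 1 := by omega
        rw [this]; exact (hCb k).1
      · have : n + 1 = 2*k + 2 := by omega
        rw [this]; exact (hCb k).2
    have hgeo : Tendsto (fun n : ℕ => C * q^n) atTop (𝓝 0) := by
      rw [show (0:ℝ) = C * 0 by ring]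
      exact (tendsto_pow_atTop_nhds_zero_of_lt_one hq0.le hq1).const_mul C
    have hy_tendsto : Tendsto y atTop (𝓝 a) := by
      rw [tendsto_iff_dist_tendsto_zero]
      apply squeeze_zero' (Eventually.of_forall fun n => dist_nonneg) _ hgeo
      filter_upwards [eventually_ge_atTop 1] with n hn
      obtain ⟨m, rfl⟩ := Nat.exists_eq_add_of_le hn
      rw [Real.dist_eq]
      calc |y (1 + m) - a| = |y (m + 1) - a| := by rw [Nat.add_comm]
        _ ≤ C * q^(m+1) := hall m
        _ = C * q^(1+m) := by rw [Nat.add_comm]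
    have hiter : ∀ n, G^[n+1] (X, Y) = (y n • A, y (n+1)) := by
      intro n
      induction n with
      | zero =>
        rw [Function.iterate_one, hG, hy0, hstep 0, hy0]
      | succ n ih =>
        rw [Function.iterate_succ_apply', ih, hG, ← hstep (n+1)]
    have hfinal : Tendsto (fun n => G^[n+1] (X, Y)) atTop (𝓝 (a • A, a)) := by
      have heq : (fun n => G^[n+1] (X, Y)) = fun n => ((y n) • A, y (n+1)) := funext hiter
      rw [heq]
      exact Tendsto.prodMk_nhds (hy_tendsto.smul_const A)
        ((tendsto_add_atTop_iff_nat 1).mpr hy_tendsto)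
    exact (tendsto_add_atTop_iff_nat 1).mp hfinal
end

section
/- Let E be a real inner product space, L : E →ₗ[ℝ] E a linear map, u ∈ E with ‖u‖ = 1, and σ, a real numbers with σ ≥ 1, a ≥ 0 and σ·a < 1. Assume L u = σ • u, and that for every v ∈ E with ⟪u, v⟫ = 0 one has ⟪u, L v⟫ = 0 and ‖L v‖ ≤ a·‖v‖. Then for all v₁, v₂ ∈ E: ‖L v₁‖²·‖L v₂‖² − ⟪L v₁, L v₂⟫² ≤ (σ·a)²·(‖v₁‖²·‖v₂‖² − ⟪v₁, v₂⟫²). (A linear map with a one-dimensional expanding direction σ and a complementary invariant contraction of norm a, with σ·a < 1, contracts two-dimensional Euclidean volumes: the Gram determinant of any pair of vectors is contracted by factor at most (σa)².) -/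
/-!
Split each vector as `v = c • u + w` with `w ⟂ u`. For such splittings the Gram determinant
decomposes as `G(c₁ • u + w₁, c₂ • u + w₂) = ‖c₁ • w₂ - c₂ • w₁‖² + G(w₁, w₂)`, and `L` respects
the splitting, multiplying the `u`-coordinate by `σ`. The first term is then contracted by `(σa)²`
because `c₁ • w₂ - c₂ • w₁` lies in the complement, and the second by `a⁴ ≤ (σa)²`: after a shear
making `w₁ ⟂ w₂`, the Gram determinant is at most a product of two squared norms.
-/

open Function Filter Topology RealInnerProductSpace

section GramDet

variable {E F : Type*} [NormedAddCommGroup E] [InnerProductSpace ℝ E]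
  [NormedAddCommGroup F] [InnerProductSpace ℝ F]

noncomputable def gramDet (x y : E) : ℝ := ‖x‖ ^ 2 * ‖y‖ ^ 2 - ⟪x, y⟫ ^ 2

lemma gramDet_nonneg (x y : E) : 0 ≤ gramDet x y := by
  have h := pow_le_pow_left₀ (abs_nonneg _) (abs_real_inner_le_norm x y) 2
  rw [sq_abs, mul_pow] at h
  exact sub_nonneg.mpr h

lemma gramDet_le (x y : E) : gramDet x y ≤ ‖x‖ ^ 2 * ‖y‖ ^ 2 :=
  sub_le_self _ (sq_nonneg _)

lemma gramDet_of_inner_eq_zero {x y : E} (h : ⟪x, y⟫ = 0) : gramDet x y = ‖x‖ ^ 2 * ‖y‖ ^ 2 := by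
  simp [gramDet, h]

lemma gramDet_sub_smul (x y : E) (t : ℝ) : gramDet x (y - t • x) = gramDet x y := by
  simp only [gramDet, norm_sub_sq_real, inner_sub_right, real_inner_smul_right, norm_smul,
    mul_pow, Real.norm_eq_abs, sq_abs, real_inner_self_eq_norm_sq, real_inner_comm x y]
  ring

/-- Lagrange's identity relative to a unit vector `u`. -/
lemma gramDet_smul_add_smul_add {u z₁ z₂ : E} (hu : ‖u‖ = 1) (h₁ : ⟪u, z₁⟫ = 0)
    (h₂ : ⟪u, z₂⟫ = 0) (b₁ b₂ : ℝ) :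
    gramDet (b₁ • u + z₁) (b₂ • u + z₂) = ‖b₁ • z₂ - b₂ • z₁‖ ^ 2 + gramDet z₁ z₂ := by
  have huu : ⟪u, u⟫ = 1 := by rw [real_inner_self_eq_norm_sq, hu, one_pow]
  have h₁' : ⟪z₁, u⟫ = 0 := by rw [real_inner_comm, h₁]
  have h₂' : ⟪z₂, u⟫ = 0 := by rw [real_inner_comm, h₂]
  simp only [gramDet, ← real_inner_self_eq_norm_sq, inner_add_left, inner_add_right,
    inner_sub_left, inner_sub_right, real_inner_smul_left, real_inner_smul_right, huu, h₁, h₂,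
    h₁', h₂', real_inner_comm z₁ z₂]
  ring

lemma inner_sub_inner_div_smul_eq_zero (x y : E) : ⟪x, y - (⟪x, y⟫ / ‖x‖ ^ 2) • x⟫ = 0 := by
  rcases eq_or_ne x 0 with rfl | hx
  · simp
  · rw [inner_sub_right, real_inner_smul_right, real_inner_self_eq_norm_sq,
      div_mul_cancel₀ _ (by positivity), sub_self]

lemma gramDet_map_le (L : E →ₗ[ℝ] F) (a : ℝ) (x y : E)
    (hL : ∀ z ∈ Submodule.span ℝ {x, y}, ‖L z‖ ≤ a * ‖z‖) :
    gramDet (L x) (L y) ≤ a ^ 4 * gramDet x y := by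
  have hL2 : ∀ z ∈ Submodule.span ℝ {x, y}, ‖L z‖ ^ 2 ≤ a ^ 2 * ‖z‖ ^ 2 := fun z hz => by
    rw [← mul_pow]; exact pow_le_pow_left₀ (norm_nonneg _) (hL z hz) 2
  set y' := y - (⟪x, y⟫ / ‖x‖ ^ 2) • x
  have hx : x ∈ Submodule.span ℝ {x, y} := Submodule.subset_span (by simp)
  have hy' : y' ∈ Submodule.span ℝ {x, y} :=
    Submodule.sub_mem _ (Submodule.subset_span (by simp)) (Submodule.smul_mem _ _ hx)
  calc gramDet (L x) (L y) = gramDet (L x) (L y') := by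
        rw [map_sub, map_smul, gramDet_sub_smul]
    _ ≤ ‖L x‖ ^ 2 * ‖L y'‖ ^ 2 := gramDet_le _ _
    _ ≤ (a ^ 2 * ‖x‖ ^ 2) * (a ^ 2 * ‖y'‖ ^ 2) :=
        mul_le_mul (hL2 x hx) (hL2 y' hy') (sq_nonneg _) (by positivity)
    _ = a ^ 4 * gramDet x y' := by
        rw [gramDet_of_inner_eq_zero (inner_sub_inner_div_smul_eq_zero x y)]; ring
    _ = a ^ 4 * gramDet x y := by rw [gramDet_sub_smul]

end GramDet

lemma exists_eq_smul_add_of_norm_eq_one {E : Type*} [NormedAddCommGroup E]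
    [InnerProductSpace ℝ E] {u : E} (hu : ‖u‖ = 1) (v : E) :
    ∃ (c : ℝ) (w : E), w ∈ (ℝ ∙ u)ᗮ ∧ v = c • u + w := by
  refine ⟨⟪u, v⟫, v - ⟪u, v⟫ • u, ?_, (add_sub_cancel _ _).symm⟩
  rw [Submodule.mem_orthogonal_singleton_iff_inner_right, ← div_one ⟪u, v⟫, ← one_pow 2, ← hu]
  exact inner_sub_inner_div_smul_eq_zero u v

/-- A linear map with a one-dimensional expanding eigendirection `u` (eigenvalue `σ`) and an
invariant orthogonal complement contracted by factor `a`, with `σa < 1`, contracts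
two-dimensional Euclidean volumes: Gram determinants of pairs of vectors are contracted by
factor at most `(σa)²`. -/
theorem stmt17 {E : Type*} [NormedAddCommGroup E] [InnerProductSpace ℝ E]
    (L : E →ₗ[ℝ] E) (u : E) (hu : ‖u‖ = 1)
    (σ a : ℝ) (hσ : 1 ≤ σ) (ha : 0 ≤ a) (hσa : σ * a < 1)
    (hLu : L u = σ • u)
    (hperp : ∀ v : E, ⟪u, v⟫ = 0 → ⟪u, L v⟫ = 0 ∧ ‖L v‖ ≤ a * ‖v‖) :
    ∀ v₁ v₂ : E,
      ‖L v₁‖ ^ 2 * ‖L v₂‖ ^ 2 - ⟪L v₁, L v₂⟫ ^ 2 ≤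
        (σ * a) ^ 2 * (‖v₁‖ ^ 2 * ‖v₂‖ ^ 2 - ⟪v₁, v₂⟫ ^ 2) := by
  intro v₁ v₂
  set K := (ℝ ∙ u)ᗮ
  have hK : ∀ w ∈ K, ⟪u, L w⟫ = 0 ∧ ‖L w‖ ≤ a * ‖w‖ := fun w hw =>
    hperp w (Submodule.mem_orthogonal_singleton_iff_inner_right.mp hw)
  obtain ⟨c₁, w₁, hw₁, rfl⟩ := exists_eq_smul_add_of_norm_eq_one hu v₁
  obtain ⟨c₂, w₂, hw₂, rfl⟩ := exists_eq_smul_add_of_norm_eq_one hu v₂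
  have hLv : ∀ (c : ℝ) (w : E), L (c • u + w) = (σ * c) • u + L w := fun c w => by
    rw [map_add, map_smul, hLu, smul_smul, mul_comm]
  have ha_sq_le : a ^ 2 ≤ σ ^ 2 := pow_le_pow_left₀ ha (by nlinarith) 2
  change gramDet _ _ ≤ (σ * a) ^ 2 * gramDet _ _
  rw [hLv, hLv, gramDet_smul_add_smul_add hu (hK w₁ hw₁).1 (hK w₂ hw₂).1,
    gramDet_smul_add_smul_add hu (Submodule.mem_orthogonal_singleton_iff_inner_right.mp hw₁)
      (Submodule.mem_orthogonal_singleton_iff_inner_right.mp hw₂)]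
  set d := c₁ • w₂ - c₂ • w₁
  have hd : d ∈ K := K.sub_mem (K.smul_mem _ hw₂) (K.smul_mem _ hw₁)
  have hcross : ‖(σ * c₁) • L w₂ - (σ * c₂) • L w₁‖ ^ 2 ≤ (σ * a) ^ 2 * ‖d‖ ^ 2 := by
    rw [show (σ * c₁) • L w₂ - (σ * c₂) • L w₁ = σ • L d by simp only [d, map_sub, map_smul]; module,
      norm_smul, mul_pow, mul_pow, Real.norm_eq_abs, sq_abs, mul_assoc, ← mul_pow a]
    gcongr
    exact (hK d hd).2
  have hgram : gramDet (L w₁) (L w₂) ≤ (σ * a) ^ 2 * gramDet w₁ w₂ := by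
    refine (gramDet_map_le L a w₁ w₂ fun z hz => (hK z ?_).2).trans ?_
    · exact Submodule.span_le.mpr (Set.pair_subset hw₁ hw₂) hz
    · exact mul_le_mul_of_nonneg_right (by nlinarith) (gramDet_nonneg w₁ w₂)
  linarith
end

section
/- Let E and F be real normed vector spaces, ρ : E × ℝ → F a map with ρ(0, 1) = 0 which is Fréchet differentiable at (0, 1) with derivative 0. Let Λ : E →L[ℝ] E be a continuous linear map, σ > 1, b ≠ 0 real numbers, and e ∈ E, and assume σ^n·‖Λ^n‖ → 0 as n → ∞. Then for every R > 0 and every ε > 0 there exists N such that for all n ≥ N and all X ∈ E, Y ∈ ℝ with ‖X‖ ≤ R and |Y| ≤ R, one has σ^n·‖ρ(Λ^n(σ^(−n) • X + e), 1 + b⁻¹·σ^(−n)·Y)‖ < ε. (The rescaled remainder terms of the renormalization, σ^n ρ̂₁, tend to 0 uniformly on compact sets.) -/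
open Function Filter Topology

/-- The rescaled remainder terms of the renormalization tend to zero uniformly on compact
sets: if `ρ(0,1) = 0` with vanishing derivative at `(0,1)` and `σ^n ‖Λ^n‖ → 0`, then
`σ^n ‖ρ(Λ^n(σ^{-n} X + e), 1 + b⁻¹ σ^{-n} Y)‖ → 0` uniformly for `‖X‖, |Y| ≤ R`. -/
theorem stmt18 {E F : Type*} [NormedAddCommGroup E] [NormedSpace ℝ E]
    [NormedAddCommGroup F] [NormedSpace ℝ F]
    (ρ : E × ℝ → F) (hρ0 : ρ (0, 1) = 0)
    (hρ : HasFDerivAt ρ (0 : E × ℝ →L[ℝ] F) (0, 1))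
    (L : E →L[ℝ] E) (σ b : ℝ) (hσ : 1 < σ) (hb : b ≠ 0) (e : E)
    (hdiss : Tendsto (fun n : ℕ => σ ^ n * ‖L ^ n‖) atTop (nhds 0)) :
    ∀ R : ℝ, 0 < R → ∀ ε : ℝ, 0 < ε → ∃ N : ℕ, ∀ n ≥ N, ∀ X : E, ∀ Y : ℝ,
      ‖X‖ ≤ R → |Y| ≤ R →
      σ ^ n * ‖ρ ((L ^ n) (σ ^ (-(n : ℤ)) • X + e), 1 + b⁻¹ * σ ^ (-(n : ℤ)) * Y)‖ < ε := by
  intro R hR ε hε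
  have hσ0 : (0:ℝ) < σ := lt_trans one_pos hσ
  have hlo : (fun p : E × ℝ => ρ p) =o[𝓝 ((0:E), (1:ℝ))] fun p => p - ((0:E), (1:ℝ)) := by
    have h := hρ.isLittleO
    simpa [hρ0] using h
  set C : ℝ := max (R + ‖e‖) (|b⁻¹| * R) + 1 with hCdef
  have hC : 0 < C := by positivity
  have hc : 0 < ε / (2 * C) := by positivity
  have hr' := hlo.def hc
  rw [Metric.eventually_nhds_iff] at hr'
  obtain ⟨r, hrpos, hr⟩ := hr'
  have h1 : ∀ᶠ n : ℕ in atTop, σ ^ n * ‖L ^ n‖ < 1 :=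
    hdiss.eventually (eventually_lt_nhds one_pos)
  have h2 : ∀ᶠ n : ℕ in atTop, C / r < σ ^ n :=
    (tendsto_pow_atTop_atTop_of_one_lt hσ).eventually_gt_atTop (C / r)
  obtain ⟨N, hN⟩ := Filter.eventually_atTop.mp (h1.and h2)
  refine ⟨N, fun n hn X Y hX hY => ?_⟩
  obtain ⟨hn1, hn2⟩ := hN n hn
  have hspos : (0:ℝ) < σ ^ n := pow_pos hσ0 n
  have hs : σ ^ (-(n:ℤ)) = (σ ^ n)⁻¹ := by rw [zpow_neg, zpow_natCast]
  set p : E × ℝ := ((L ^ n) (σ ^ (-(n:ℤ)) • X + e), 1 + b⁻¹ * σ ^ (-(n:ℤ)) * Y) with hp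
  have hdiff : p - ((0:E), (1:ℝ)) =
      ((L ^ n) (σ ^ (-(n:ℤ)) • X + e), b⁻¹ * σ ^ (-(n:ℤ)) * Y) := by
    simp [hp, Prod.ext_iff]
  -- bound the first coordinate
  have hd1 : σ ^ n * ‖(L ^ n) (σ ^ (-(n:ℤ)) • X + e)‖ ≤ C := by
    have hb1 : ‖(L ^ n) (σ ^ (-(n:ℤ)) • X + e)‖ ≤ ‖L ^ n‖ * ((σ ^ n)⁻¹ * R + ‖e‖) := by
      calc ‖(L ^ n) (σ ^ (-(n:ℤ)) • X + e)‖ ≤ ‖L ^ n‖ * ‖σ ^ (-(n:ℤ)) • X + e‖ :=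
            (L ^ n).le_opNorm _
        _ ≤ ‖L ^ n‖ * ((σ ^ n)⁻¹ * R + ‖e‖) := by
            apply mul_le_mul_of_nonneg_left _ (norm_nonneg _)
            calc ‖σ ^ (-(n:ℤ)) • X + e‖ ≤ ‖σ ^ (-(n:ℤ)) • X‖ + ‖e‖ := norm_add_le _ _
              _ ≤ (σ ^ n)⁻¹ * R + ‖e‖ := by
                  rw [norm_smul, hs, Real.norm_eq_abs, abs_of_pos (inv_pos.mpr hspos)]
                  have := mul_le_mul_of_nonneg_left hX (le_of_lt (inv_pos.mpr hspos))
                  linarith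
    have hinv1 : (σ ^ n)⁻¹ ≤ 1 := by
      rw [inv_le_one_iff₀]; right; exact one_le_pow₀ hσ.le
    have hLn : (0:ℝ) ≤ ‖L ^ n‖ := norm_nonneg _
    have : σ ^ n * ‖(L ^ n) (σ ^ (-(n:ℤ)) • X + e)‖ ≤ σ ^ n * (‖L ^ n‖ * ((σ ^ n)⁻¹ * R + ‖e‖)) :=
      mul_le_mul_of_nonneg_left hb1 hspos.le
    have h2' : σ ^ n * (‖L ^ n‖ * ((σ ^ n)⁻¹ * R + ‖e‖)) = ‖L ^ n‖ * R + σ ^ n * ‖L ^ n‖ * ‖e‖ := by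
      field_simp
    have hLn' : ‖L ^ n‖ ≤ 1 := by
      have h1' : ‖L ^ n‖ ≤ σ ^ n * ‖L ^ n‖ := by
        nlinarith [one_le_pow₀ hσ.le (n := n)]
      linarith
    have hRe : R + ‖e‖ ≤ C := by
      have := le_max_left (R + ‖e‖) (|b⁻¹| * R)
      rw [hCdef]; linarith
    nlinarith [norm_nonneg e, mul_nonneg hspos.le hLn]
  -- bound the second coordinate
  have hd2 : σ ^ n * |b⁻¹ * σ ^ (-(n:ℤ)) * Y| ≤ C := by
    have : |b⁻¹ * σ ^ (-(n:ℤ)) * Y| = |b⁻¹| * (σ ^ n)⁻¹ * |Y| := by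
      rw [abs_mul, abs_mul, hs, abs_of_pos (inv_pos.mpr hspos)]
    rw [this]
    have heq : σ ^ n * (|b⁻¹| * (σ ^ n)⁻¹ * |Y|) = |b⁻¹| * |Y| := by
      field_simp
    rw [heq]
    have : |b⁻¹| * |Y| ≤ |b⁻¹| * R := mul_le_mul_of_nonneg_left hY (abs_nonneg _)
    have hle : |b⁻¹| * R ≤ C := by
      have := le_max_right (R + ‖e‖) (|b⁻¹| * R)
      rw [hCdef]; linarith
    linarith
  -- key bound
  have key : σ ^ n * ‖p - ((0:E), (1:ℝ))‖ ≤ C := by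
    rw [hdiff, Prod.norm_def]
    rw [mul_max_of_nonneg _ _ hspos.le]
    exact max_le hd1 (by rw [Real.norm_eq_abs]; exact hd2)
  have hdist : dist p ((0:E), (1:ℝ)) < r := by
    rw [dist_eq_norm]
    have h1' : ‖p - ((0:E), (1:ℝ))‖ ≤ C / σ ^ n := by
      rw [le_div_iff₀ hspos]; linarith [key]
    have h2' : C / σ ^ n < r := by
      rw [div_lt_iff₀ hspos]
      rw [div_lt_iff₀ hrpos] at hn2
      linarith [hn2]
    linarith
  have hfin : ‖ρ p‖ ≤ ε / (2 * C) * ‖p - ((0:E), (1:ℝ))‖ := hr hdist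
  have hstep : σ ^ n * ‖ρ p‖ ≤ ε / (2 * C) * (σ ^ n * ‖p - ((0:E), (1:ℝ))‖) := by
    calc σ ^ n * ‖ρ p‖ ≤ σ ^ n * (ε / (2 * C) * ‖p - ((0:E), (1:ℝ))‖) :=
          mul_le_mul_of_nonneg_left hfin hspos.le
      _ = ε / (2 * C) * (σ ^ n * ‖p - ((0:E), (1:ℝ))‖) := by ring
  have hstep2 : ε / (2 * C) * (σ ^ n * ‖p - ((0:E), (1:ℝ))‖) ≤ ε / (2 * C) * C :=
    mul_le_mul_of_nonneg_left key hc.le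
  have hCε : ε / (2 * C) * C = ε / 2 := by field_simp
  linarith
end
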